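/- arXiv:2401.16372 — 2 statements merged into one kernel-verified Lean document; each statement's English description precedes it below -/
import Mathlib

section
/- Let A ∈ ℝ^{n×n}, C ∈ ℝ^{q×n}, F ∈ ℝ^{r×n}, t₁ > 0, and let O be the observability matrix of (C, A). Then the following are equivalent: (i) for every x₀ ∈ ℝ^n, if C·exp(tA)·x₀ = 0 for all t ∈ [0, t₁], then F·x₀ = 0 (i.e., the functional Fx(0) of the autonomic system ẋ = Ax is uniquely determined by the output y = Cx on [0, t₁]); (ii) rank([O; F]) = rank(O). -/
/-! Both sides say `ker O ≤ ker F`. For the rank condition this is rank–nullity, as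
`ker [O; F] = ker O ⊓ ker F`. For the output condition, `t ↦ C exp(tA) x` is real-analytic with
`k`-th derivative `C Aᵏ exp(tA) x`; vanishing on `[0, t₁]` it vanishes on all of `ℝ`, so every
`C Aᵏ x = 0`, and conversely these kill every term of the exponential series. By Cayley–Hamilton,
`C Aᵏ x = 0` for all `k` as soon as it holds for `k < n`, i.e. as soon as `O x = 0`. -/

open Matrix intervalIntegral

/-- Observability matrix of the pair `(C, A)`: the vertical block stack of
`C, C*A, C*A², …, C*A^(n-1)`, indexed so that entry `((k, i), j)` is `(C * A^k) i j`. -/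
noncomputable def obsMat {n q : ℕ} (C : Matrix (Fin q) (Fin n) ℝ)
    (A : Matrix (Fin n) (Fin n) ℝ) : Matrix (Fin n × Fin q) (Fin n) ℝ :=
  fun ki j => (C * A ^ (ki.1 : ℕ)) ki.2 j

/-- Observability Gramian `W(t₁) = ∫₀^{t₁} exp(Aᵀτ) Cᵀ C exp(Aτ) dτ` (entrywise integral). -/
noncomputable def obsGram {n q : ℕ} (A : Matrix (Fin n) (Fin n) ℝ)
    (C : Matrix (Fin q) (Fin n) ℝ) (t₁ : ℝ) : Matrix (Fin n) (Fin n) ℝ :=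
  fun i j => ∫ τ in (0:ℝ)..t₁,
    (NormedSpace.exp (τ • Aᵀ) * Cᵀ * C * NormedSpace.exp (τ • A)) i j

open NormedSpace Set

section BanachAlgebra

variable {𝔸 E : Type*} [NormedRing 𝔸] [NormedAlgebra ℝ 𝔸] [CompleteSpace 𝔸]
  [NormedAddCommGroup E] [NormedSpace ℝ E] (L : 𝔸 →L[ℝ] E) (a : 𝔸)

theorem map_exp_eq_zero_of_map_pow_eq_zero (h : ∀ k, L (a ^ k) = 0) : L (exp a) = 0 := by
  have hsum := (exp_series_hasSum_exp' (𝕂 := ℝ) a).mapL L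
  simp only [map_smul, h, smul_zero] at hsum
  exact hsum.unique hasSum_zero

theorem map_pow_mul_exp_smul_eq_zero (h : ∀ t : ℝ, L (exp (t • a)) = 0) (k : ℕ) (t : ℝ) :
    L (a ^ k * exp (t • a)) = 0 := by
  induction k generalizing t with
  | zero => simpa using h t
  | succ k ih =>
    have hderiv := (L.comp (ContinuousLinearMap.mul ℝ 𝔸 (a ^ k))).hasFDerivAt.comp_hasDerivAt t
      (hasDerivAt_exp_smul_const' (𝕂 := ℝ) a t)
    have hzero : (fun u : ℝ => L (a ^ k * exp (u • a))) = fun _ => 0 := funext ih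
    simp only [Function.comp_def, ContinuousLinearMap.comp_apply,
      ContinuousLinearMap.mul_apply', hzero] at hderiv
    rw [pow_succ, mul_assoc]
    exact (hderiv.unique (hasDerivAt_const t 0))

theorem map_exp_smul_eq_zero_of_forall_mem_Ioo {t₁ : ℝ} (ht₁ : 0 < t₁)
    (h : ∀ t ∈ Ioo 0 t₁, L (exp (t • a)) = 0) (t : ℝ) : L (exp (t • a)) = 0 := by
  have hanalytic : AnalyticOnNhd ℝ (fun t : ℝ => L (exp (t • a))) univ := fun t _ =>
    L.analyticAt _ |>.comp ((exp_analytic (𝕂 := ℝ) _).comp (analyticAt_id.smul analyticAt_const))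
  have hmid : t₁ / 2 ∈ Ioo 0 t₁ := ⟨by positivity, by linarith⟩
  refine hanalytic.eqOn_zero_of_preconnected_of_eventuallyEq_zero isPreconnected_univ
    (mem_univ (t₁ / 2)) ?_ (mem_univ t)
  filter_upwards [isOpen_Ioo.mem_nhds hmid] with u hu using h u hu

theorem map_exp_smul_eq_zero_on_Icc_iff {t₁ : ℝ} (ht₁ : 0 < t₁) :
    (∀ t ∈ Icc 0 t₁, L (exp (t • a)) = 0) ↔ ∀ k, L (a ^ k) = 0 := by
  constructor
  · intro h k
    have hall := map_exp_smul_eq_zero_of_forall_mem_Ioo L a ht₁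
      fun t ht => h t (Ioo_subset_Icc_self ht)
    simpa using map_pow_mul_exp_smul_eq_zero L a hall k 0
  · intro h t _
    refine map_exp_eq_zero_of_map_pow_eq_zero L _ fun k => ?_
    rw [smul_pow, map_smul, h, smul_zero]

end BanachAlgebra

namespace Matrix

section Powers

variable {m n R : Type*} [Fintype n] [CommRing R]

def outputMap (C : Matrix m n R) (x : n → R) : Matrix n n R →ₗ[R] m → R where
  toFun E := C *ᵥ (E *ᵥ x)
  map_add' E E' := by rw [add_mulVec, mulVec_add]
  map_smul' c E := by rw [smul_mulVec, mulVec_smul]; rfl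

open Polynomial in
theorem map_pow_eq_zero_of_forall_lt_card [DecidableEq n] [Nontrivial R] {V : Type*}
    [AddCommGroup V] [Module R V] (L : Matrix n n R →ₗ[R] V) (A : Matrix n n R)
    (h : ∀ k < Fintype.card n, L (A ^ k) = 0) (k : ℕ) : L (A ^ k) = 0 := by
  rcases isEmpty_or_nonempty n with _ | _
  · rw [Subsingleton.elim (A ^ k) 0, map_zero]
  have hdeg : (X ^ k %ₘ A.charpoly).natDegree < Fintype.card n := by
    rw [← A.charpoly_natDegree_eq_dim]
    refine natDegree_modByMonic_lt _ A.charpoly_monic fun h1 => Fintype.card_ne_zero (α := n) ?_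
    rw [← A.charpoly_natDegree_eq_dim, h1, natDegree_one]
  rw [pow_eq_aeval_mod_charpoly, aeval_eq_sum_range' hdeg, map_sum]
  exact Finset.sum_eq_zero fun i hi => by rw [map_smul, h i (Finset.mem_range.mp hi), smul_zero]

end Powers

section Rank

variable {m₁ m₂ n K : Type*} [Fintype n] [Field K]

theorem ker_mulVecLin_fromRows (A₁ : Matrix m₁ n K) (A₂ : Matrix m₂ n K) :
    LinearMap.ker (fromRows A₁ A₂).mulVecLin
      = LinearMap.ker A₁.mulVecLin ⊓ LinearMap.ker A₂.mulVecLin := by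
  ext x
  simp [funext_iff, Sum.forall]

theorem rank_fromRows_eq_rank_iff (A₁ : Matrix m₁ n K) (A₂ : Matrix m₂ n K) :
    (fromRows A₁ A₂).rank = A₁.rank ↔ LinearMap.ker A₁.mulVecLin ≤ LinearMap.ker A₂.mulVecLin := by
  have hrank₁ := LinearMap.finrank_range_add_finrank_ker (fromRows A₁ A₂).mulVecLin
  have hrank₂ := LinearMap.finrank_range_add_finrank_ker A₁.mulVecLin
  rw [ker_mulVecLin_fromRows] at hrank₁
  change Module.finrank K _ = Module.finrank K _ ↔ _
  rw [← inf_eq_left]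
  constructor
  · intro h
    exact Submodule.eq_of_le_of_finrank_eq inf_le_left (by omega)
  · intro h
    rw [h] at hrank₁
    omega

end Rank

theorem mulVec_exp_smul_mulVec_eq_zero_on_Icc_iff {m n : Type*} [Fintype m] [Fintype n]
    [DecidableEq n] (A : Matrix n n ℝ) (C : Matrix m n ℝ) (x : n → ℝ) {t₁ : ℝ} (ht₁ : 0 < t₁) :
    (∀ t ∈ Icc 0 t₁, C *ᵥ (exp (t • A) *ᵥ x) = 0) ↔ ∀ k : ℕ, C *ᵥ (A ^ k *ᵥ x) = 0 := by
  -- `exp` is defined topologically, so any compatible submultiplicative norm will do.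
  let := Matrix.linftyOpNormedRing (n := n) (α := ℝ)
  let := Matrix.linftyOpNormedAlgebra (n := n) (α := ℝ) (R := ℝ)
  exact map_exp_smul_eq_zero_on_Icc_iff (outputMap C x).toContinuousLinearMap A ht₁

end Matrix

theorem obsMat_mulVec_eq_zero_iff {n q : ℕ} (C : Matrix (Fin q) (Fin n) ℝ)
    (A : Matrix (Fin n) (Fin n) ℝ) (x : Fin n → ℝ) :
    obsMat C A *ᵥ x = 0 ↔ ∀ k : ℕ, C *ᵥ (A ^ k *ᵥ x) = 0 := by
  have hblocks : obsMat C A *ᵥ x = 0 ↔ ∀ k : Fin n, C *ᵥ (A ^ (k : ℕ) *ᵥ x) = 0 := by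
    simp only [funext_iff, Prod.forall, mulVec_mulVec]
    rfl
  rw [hblocks]
  refine ⟨fun h => map_pow_eq_zero_of_forall_lt_card (outputMap C x) A fun k hk => ?_,
    fun h k => h k⟩
  exact h ⟨k, by simpa using hk⟩

/-- The functional `F x(0)` of the autonomous system `ẋ = Ax`, `y = Cx` is uniquely
determined by the output on `[0, t₁]` (i.e. `C exp(tA) x₀ = 0` on `[0, t₁]` forces
`F x₀ = 0`) if and only if `rank([O; F]) = rank(O)`. -/
theorem functional_observability_iff_rank {n q r : ℕ}
    (A : Matrix (Fin n) (Fin n) ℝ) (C : Matrix (Fin q) (Fin n) ℝ)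
    (F : Matrix (Fin r) (Fin n) ℝ) (t₁ : ℝ) (ht₁ : 0 < t₁) :
    (∀ x₀ : Fin n → ℝ,
        (∀ t ∈ Set.Icc (0:ℝ) t₁,
          C.mulVec ((NormedSpace.exp (t • A)).mulVec x₀) = 0) →
        F.mulVec x₀ = 0) ↔
      (Matrix.fromRows (obsMat C A) F).rank = (obsMat C A).rank := by
  rw [rank_fromRows_eq_rank_iff, SetLike.le_def]
  simp only [LinearMap.mem_ker, mulVecLin_apply]
  refine forall_congr' fun x => imp_congr_left ?_
  rw [obsMat_mulVec_eq_zero_iff, mulVec_exp_smul_mulVec_eq_zero_on_Icc_iff A C x ht₁]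
end

section
/- Let A ∈ ℝ^{n×n}, C ∈ ℝ^{q×n}, and t₁ > 0. Then the column space of the observability Gramian W(t₁) equals the column space of Oᵀ, where O is the observability matrix of (C, A); equivalently, Im(W(t₁)) equals the row space of O viewed as a subspace of ℝ^n. -/
open Matrix intervalIntegral

/-!
For any matrix `M`, the range of `Mᵀ` is the annihilator of `ker M`. Since `W(t₁)` is symmetric,
it therefore suffices to show `ker W(t₁) = ker O`; both equal the unobservable subspace
`⋂ₖ ker (C Aᵏ)`. For `O` this is Cayley–Hamilton. `W(t₁)` is positive semidefinite with
`xᵀ W(t₁) x = ∫₀^{t₁} ‖C exp(τA) x‖² dτ`, so `W(t₁) x = 0` iff `C exp(τA) x` vanishes on `[0, t₁]`.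
Differentiating shows that then `C Aᵏ exp(τA) x = 0` for all `k`, and the unobservable subspace
is `A`-invariant, hence `exp(τA)`-invariant, which gives both inclusions.
-/

open NormedSpace

namespace Matrix

section Field

variable {K m m' n : Type*} [Field K] [Fintype m] [Fintype m'] [Fintype n]

theorem range_mulVecLin_transpose [DecidableEq m] [DecidableEq n] (M : Matrix m n K) :
    LinearMap.range Mᵀ.mulVecLin =
      (LinearMap.ker M.mulVecLin).dualAnnihilator.map
        ((Pi.basisFun K n).dualBasis.equivFun : Module.Dual K (n → K) →ₗ[K] n → K) := by
  have hcomm : Mᵀ.mulVecLin ∘ₗ ((Pi.basisFun K m).dualBasis.equivFun : _ →ₗ[K] _) =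
      (Pi.basisFun K n).dualBasis.equivFun.toLinearMap ∘ₗ M.mulVecLin.dualMap := by
    ext φ i
    simp only [LinearMap.comp_apply, LinearEquiv.coe_coe, Module.Basis.dualBasis_equivFun,
      mulVecLin_apply, LinearMap.dualMap_apply, Pi.basisFun_apply, mulVec_single_one]
    rw [LinearMap.pi_apply_eq_sum_univ φ]
    simp only [mulVec, dotProduct, transpose_apply, Module.Basis.dualBasis_equivFun,
      Pi.basisFun_apply, col_apply, smul_eq_mul]
    refine Finset.sum_congr rfl fun j _ => congrArg _ (congrArg φ ?_)
    ext k
    simp [Pi.single_apply, eq_comm]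
  rw [← LinearMap.range_dualMap_eq_dualAnnihilator_ker, ← LinearMap.range_comp, ← hcomm,
    LinearEquiv.range_comp]

theorem range_mulVecLin_transpose_eq_of_ker_eq {M : Matrix m n K} {N : Matrix m' n K}
    (h : LinearMap.ker M.mulVecLin = LinearMap.ker N.mulVecLin) :
    LinearMap.range Mᵀ.mulVecLin = LinearMap.range Nᵀ.mulVecLin := by
  classical
  rw [range_mulVecLin_transpose, h, range_mulVecLin_transpose]

end Field

section Exp

variable {𝕂 n : Type*} [RCLike 𝕂] [Fintype n] [DecidableEq n]

-- Matrices carry no global norm; the ℓ∞ operator norm induces their usual topology.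
attribute [local instance] Matrix.linftyOpNormedRing Matrix.linftyOpNormedAlgebra

theorem exp_mulVec_mem {A : Matrix n n 𝕂} {p : Submodule 𝕂 (n → 𝕂)}
    (hA : ∀ v ∈ p, A *ᵥ v ∈ p) {v : n → 𝕂} (hv : v ∈ p) : exp A *ᵥ v ∈ p := by
  have hpow : ∀ k : ℕ, A ^ k *ᵥ v ∈ p := by
    intro k
    induction k with
    | zero => simpa using hv
    | succ k ih => simpa [pow_succ', ← mulVec_mulVec] using hA _ ih
  have hsum : HasSum (fun k : ℕ => ((k.factorial⁻¹ : 𝕂) • A ^ k) *ᵥ v) (exp A *ᵥ v) :=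
    (exp_series_hasSum_exp' (𝕂 := 𝕂) A).map (mulVec.addMonoidHomLeft v)
      (continuous_id.matrix_mulVec continuous_const)
  rw [← hsum.tsum_eq]
  refine tsum_mem p.closed_of_finiteDimensional fun k => ?_
  rw [smul_mulVec]
  exact p.smul_mem _ (hpow k)

theorem continuous_exp_smul (A : Matrix n n 𝕂) : Continuous fun τ : 𝕂 => exp (τ • A) :=
  exp_continuous.comp (continuous_id.smul continuous_const)

theorem hasDerivAt_exp_smul_mulVec (A : Matrix n n 𝕂) (x : n → 𝕂) (t : 𝕂) :
    HasDerivAt (fun τ : 𝕂 => exp (τ • A) *ᵥ x) (A *ᵥ (exp (t • A) *ᵥ x)) t := by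
  have h := (LinearMap.toContinuousLinearMap
    ((mulVecBilin 𝕂 𝕂).flip x)).hasFDerivAt.comp_hasDerivAt t
      (hasDerivAt_exp_smul_const' (𝕂 := 𝕂) A t)
  rw [mulVec_mulVec]
  exact h

end Exp

end Matrix

section Unobservable

open Polynomial

variable {R m n : Type*} [CommRing R] [Fintype n] [DecidableEq n]

def unobservableSubspace (C : Matrix m n R) (A : Matrix n n R) : Submodule R (n → R) :=
  ⨅ k : ℕ, LinearMap.ker (C * A ^ k).mulVecLin

variable {C : Matrix m n R} {A : Matrix n n R} {x : n → R}

theorem mem_unobservableSubspace :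
    x ∈ unobservableSubspace C A ↔ ∀ k : ℕ, (C * A ^ k) *ᵥ x = 0 := by
  simp [unobservableSubspace]

theorem mulVec_mem_unobservableSubspace (hx : x ∈ unobservableSubspace C A) :
    A *ᵥ x ∈ unobservableSubspace C A := by
  rw [mem_unobservableSubspace] at hx ⊢
  intro k
  rw [mulVec_mulVec, Matrix.mul_assoc, ← pow_succ]
  exact hx (k + 1)

/-- By Cayley–Hamilton, every power of `A` is a combination of `A ^ k` with `k < card n`. -/
theorem mem_unobservableSubspace_of_forall_lt [Nontrivial R]
    (h : ∀ k < Fintype.card n, (C * A ^ k) *ᵥ x = 0) : x ∈ unobservableSubspace C A := by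
  rcases isEmpty_or_nonempty n with hn | hn
  · rw [Subsingleton.elim x 0]
    exact zero_mem _
  have hne : A.charpoly ≠ 1 := fun h1 => by
    have := A.charpoly_natDegree_eq_dim
    rw [h1, natDegree_one] at this
    exact Fintype.card_ne_zero this.symm
  refine mem_unobservableSubspace.2 fun k => ?_
  have hdeg : (X ^ k %ₘ A.charpoly).natDegree < Fintype.card n :=
    A.charpoly_natDegree_eq_dim ▸ natDegree_modByMonic_lt _ A.charpoly_monic hne
  rw [pow_eq_aeval_mod_charpoly, aeval_eq_sum_range' hdeg, Matrix.mul_sum, sum_mulVec]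
  refine Finset.sum_eq_zero fun i hi => ?_
  rw [Matrix.mul_smul, smul_mulVec, h i (Finset.mem_range.1 hi), smul_zero]

end Unobservable

section UnobservableExp

variable {𝕂 m n : Type*} [RCLike 𝕂] [Fintype n] [DecidableEq n]
  {C : Matrix m n 𝕂} {A : Matrix n n 𝕂} {x : n → 𝕂}

theorem exp_smul_mulVec_mem_unobservableSubspace (hx : x ∈ unobservableSubspace C A) (τ : 𝕂) :
    exp (τ • A) *ᵥ x ∈ unobservableSubspace C A :=
  exp_mulVec_mem (fun v hv => by
    rw [smul_mulVec]
    exact Submodule.smul_mem _ _ (mulVec_mem_unobservableSubspace hv)) hx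

theorem mul_mulVec_exp_smul_mulVec_eq_zero [Fintype m] {U : Set 𝕂} (hU : IsOpen U)
    {B : Matrix m n 𝕂} (h : ∀ τ ∈ U, B *ᵥ (exp (τ • A) *ᵥ x) = 0) :
    ∀ τ ∈ U, (B * A) *ᵥ (exp (τ • A) *ᵥ x) = 0 := by
  intro τ hτ
  have hderiv : HasDerivAt (fun s : 𝕂 => B *ᵥ (exp (s • A) *ᵥ x))
      ((B * A) *ᵥ (exp (τ • A) *ᵥ x)) τ := by
    rw [← mulVec_mulVec]
    exact B.mulVecLin.toContinuousLinearMap.hasFDerivAt.comp_hasDerivAt τ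
      (hasDerivAt_exp_smul_mulVec A x τ)
  have hzero : HasDerivAt (fun s : 𝕂 => B *ᵥ (exp (s • A) *ᵥ x)) 0 τ :=
    (hasDerivAt_const τ 0).congr_of_eventuallyEq (Filter.eventually_of_mem (hU.mem_nhds hτ) h)
  exact hderiv.unique hzero

theorem mem_unobservableSubspace_of_mulVec_exp_smul_mulVec_eq_zero [Fintype m] {U : Set 𝕂}
    (hU : IsOpen U) (hne : U.Nonempty) (h : ∀ τ ∈ U, C *ᵥ (exp (τ • A) *ᵥ x) = 0) :
    x ∈ unobservableSubspace C A := by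
  have hpow : ∀ k : ℕ, ∀ τ ∈ U, (C * A ^ k) *ᵥ (exp (τ • A) *ᵥ x) = 0 := by
    intro k
    induction k with
    | zero => simpa using h
    | succ k ih =>
      rw [pow_succ, ← Matrix.mul_assoc]
      exact mul_mulVec_exp_smul_mulVec_eq_zero hU ih
  obtain ⟨s, hs⟩ := hne
  have hx : x = exp ((-s) • A) *ᵥ (exp (s • A) *ᵥ x) := by
    rw [mulVec_mulVec, ← exp_add_of_commute _ _ (((Commute.refl A).smul_left _).smul_right _),
      ← add_smul, neg_add_cancel, zero_smul, exp_zero, one_mulVec]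
  rw [hx]
  exact exp_smul_mulVec_mem_unobservableSubspace
    (mem_unobservableSubspace.2 fun k => hpow k s hs) _

end UnobservableExp

theorem dotProduct_intervalIntegral_mulVec {m n : Type*} [Fintype m] [Fintype n]
    {F : ℝ → Matrix m n ℝ} {a b : ℝ} (hF : ∀ i j, IntervalIntegrable (fun τ => F τ i j)
      MeasureTheory.volume a b) (x : m → ℝ) (y : n → ℝ) :
    x ⬝ᵥ ((fun i j => ∫ τ in a..b, F τ i j : Matrix m n ℝ) *ᵥ y) =
      ∫ τ in a..b, x ⬝ᵥ (F τ *ᵥ y) := by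
  have hrow : ∀ i, IntervalIntegrable (fun τ => ∑ j, F τ i j * y j) MeasureTheory.volume a b :=
    fun i => by
      simpa [Finset.sum_fn] using
        IntervalIntegrable.sum Finset.univ fun j _ => (hF i j).mul_const (y j)
  simp only [dotProduct, mulVec]
  rw [integral_finsetSum fun i _ => (hrow i).const_mul (x i)]
  refine Finset.sum_congr rfl fun i _ => ?_
  rw [integral_const_mul, integral_finsetSum fun j _ => (hF i j).mul_const (y j)]
  simp only [integral_mul_const]

section Gramian

variable {n q : ℕ} (A : Matrix (Fin n) (Fin n) ℝ) (C : Matrix (Fin q) (Fin n) ℝ) (t : ℝ)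

theorem obsGram_eq_integral_transpose_mul_self :
    obsGram A C t = fun i j => ∫ τ in (0:ℝ)..t,
      ((C * exp (τ • A))ᵀ * (C * exp (τ • A))) i j := by
  ext i j
  simp only [obsGram, transpose_mul, ← exp_transpose, transpose_smul, Matrix.mul_assoc]

theorem isSymm_obsGram : (obsGram A C t).IsSymm := by
  ext i j
  simp only [obsGram_eq_integral_transpose_mul_self]
  refine integral_congr fun τ _ => ?_
  rw [← transpose_apply (_ * _), transpose_mul, transpose_transpose]

theorem dotProduct_obsGram_mulVec (x : Fin n → ℝ) :
    x ⬝ᵥ (obsGram A C t *ᵥ x) =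
      ∫ τ in (0:ℝ)..t, (C *ᵥ (exp (τ • A) *ᵥ x)) ⬝ᵥ (C *ᵥ (exp (τ • A) *ᵥ x)) := by
  have hΦ : Continuous fun τ : ℝ => C * exp (τ • A) :=
    continuous_const.matrix_mul (continuous_exp_smul A)
  rw [obsGram_eq_integral_transpose_mul_self, dotProduct_intervalIntegral_mulVec fun i j =>
    ((hΦ.matrix_transpose.matrix_mul hΦ).matrix_elem i j).intervalIntegrable _ _]
  simp only [← mulVec_mulVec, dotProduct_mulVec, vecMul_transpose]

theorem posSemidef_obsGram (ht : 0 ≤ t) : (obsGram A C t).PosSemidef := by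
  refine .of_dotProduct_mulVec_nonneg (isHermitian_iff_isSymm.2 (isSymm_obsGram A C t))
    fun x => ?_
  rw [star_trivial, dotProduct_obsGram_mulVec]
  exact integral_nonneg ht fun τ _ => Fintype.sum_nonneg fun i => mul_self_nonneg _

theorem ker_mulVecLin_obsGram (ht : 0 < t) :
    LinearMap.ker (obsGram A C t).mulVecLin = unobservableSubspace C A := by
  ext x
  rw [LinearMap.mem_ker, mulVecLin_apply,
    ← (posSemidef_obsGram A C t ht.le).dotProduct_mulVec_zero_iff, star_trivial,
    dotProduct_obsGram_mulVec]
  have hg : Continuous fun τ : ℝ => C *ᵥ (exp (τ • A) *ᵥ x) :=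
    continuous_const.matrix_mulVec ((continuous_exp_smul A).matrix_mulVec continuous_const)
  have hnonneg (τ : ℝ) : 0 ≤ (C *ᵥ (exp (τ • A) *ᵥ x)) ⬝ᵥ (C *ᵥ (exp (τ • A) *ᵥ x)) :=
    Fintype.sum_nonneg fun i => mul_self_nonneg _
  constructor
  · intro h
    refine mem_unobservableSubspace_of_mulVec_exp_smul_mulVec_eq_zero isOpen_Ioo
      (Set.nonempty_Ioo.2 ht) fun τ hτ => ?_
    by_contra hne
    have hpos := integral_pos ht (hg.dotProduct hg).continuousOn (fun s _ => hnonneg s)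
      ⟨τ, Set.Ioo_subset_Icc_self hτ, (hnonneg τ).lt_of_ne' (mt dotProduct_self_eq_zero.1 hne)⟩
    exact hpos.ne' h
  · intro hx
    have hzero : ∀ τ : ℝ, C *ᵥ (exp (τ • A) *ᵥ x) = 0 := fun τ => by
      simpa using mem_unobservableSubspace.1 (exp_smul_mulVec_mem_unobservableSubspace hx τ) 0
    simp only [hzero, dotProduct_zero, integral_zero]

theorem ker_mulVecLin_obsMat :
    LinearMap.ker (obsMat C A).mulVecLin = unobservableSubspace C A := by
  ext x
  rw [LinearMap.mem_ker, mulVecLin_apply]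
  constructor
  · intro h
    refine mem_unobservableSubspace_of_forall_lt fun k hk => funext fun i => ?_
    exact congrFun h (⟨k, by simpa using hk⟩, i)
  · intro hx
    funext ki
    exact congrFun (mem_unobservableSubspace.1 hx ki.1) ki.2

end Gramian

/-- The column space of the observability Gramian `W(t₁)` (for `t₁ > 0`) equals the
column space of `Oᵀ`, i.e. `Im(W(t₁))` equals the row space of the observability
matrix `O` viewed as a subspace of `ℝ^n`. -/
theorem gramian_image_eq_obs_rowspace {n q : ℕ}
    (A : Matrix (Fin n) (Fin n) ℝ) (C : Matrix (Fin q) (Fin n) ℝ)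
    (t₁ : ℝ) (ht₁ : 0 < t₁) :
    LinearMap.range (obsGram A C t₁).mulVecLin =
      LinearMap.range (obsMat C A)ᵀ.mulVecLin := by
  rw [← (isSymm_obsGram A C t₁).eq]
  exact range_mulVecLin_transpose_eq_of_ker_eq <| by
    rw [ker_mulVecLin_obsGram A C t₁ ht₁, ker_mulVecLin_obsMat]
end
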